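/- arXiv:2101.03845 — 2 statements merged into one kernel-verified Lean document; each statement's English description precedes it below -/
import Mathlib

section
/- Let α̂ : U → ℝ_{>0} be a smooth function on an open set U ⊆ ℝ² satisfying Δ₀ log(α̂²) = −4(2 α̂² − α̂^{−2}) (the affine 2D Toda system in the case α̂₋ = α̂₊ = α̂). Then Ω := log(√2 · α̂²) satisfies the sinh-Gordon equation Δ₀ Ω = −8√2 · sinh(Ω). -/
noncomputable section

/-- The flat Laplacian `Δ₀ f = ∂²f/∂x² + ∂²f/∂y²` on (an open subset of) `ℝ²`. -/
def flatLaplacian (f : ℝ × ℝ → ℝ) (p : ℝ × ℝ) : ℝ :=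
  iteratedDeriv 2 (fun t => f (t, p.2)) p.1 + iteratedDeriv 2 (fun t => f (p.1, t)) p.2

lemma iteratedDeriv_two_shift (c : ℝ) (g : ℝ → ℝ) :
    iteratedDeriv 2 (fun t => c + g t) = iteratedDeriv 2 g := by
  have h1 : deriv (fun t => c + g t) = deriv g := funext fun x => deriv_const_add c
  simp only [show (2:ℕ) = 1 + 1 from rfl, iteratedDeriv_succ, iteratedDeriv_zero, h1]

lemma iteratedDeriv_two_congr {f g : ℝ → ℝ} {x : ℝ} (h : f =ᶠ[nhds x] g) :
    iteratedDeriv 2 f x = iteratedDeriv 2 g x :=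
  Filter.EventuallyEq.iteratedDeriv_eq 2 h

theorem symmetric_affine_toda_is_sinh_gordon
    (U : Set (ℝ × ℝ)) (hUo : IsOpen U) (ah : ℝ × ℝ → ℝ)
    (hpos : ∀ p ∈ U, 0 < ah p)
    (hsm : ContDiffOn ℝ (⊤ : ℕ∞) ah U)
    (heq : ∀ p ∈ U,
      flatLaplacian (fun q => Real.log (ah q ^ 2)) p =
        -4 * (2 * ah p ^ 2 - (ah p ^ 2)⁻¹)) :
    ∀ p ∈ U,
      flatLaplacian (fun q => Real.log (Real.sqrt 2 * ah q ^ 2)) p =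
        -8 * Real.sqrt 2 * Real.sinh (Real.log (Real.sqrt 2 * ah p ^ 2)) := by
  intro p hp
  have h2 : (0:ℝ) < Real.sqrt 2 := Real.sqrt_pos.mpr (by norm_num)
  -- log (√2 * a^2) = log √2 + log (a^2) on U
  have hlogeq : ∀ q ∈ U, Real.log (Real.sqrt 2 * ah q ^ 2) =
      Real.log (Real.sqrt 2) + Real.log (ah q ^ 2) := fun q hq =>
    Real.log_mul (ne_of_gt h2) (pow_ne_zero _ (ne_of_gt (hpos q hq)))
  -- Laplacian equality
  have hLap : flatLaplacian (fun q => Real.log (Real.sqrt 2 * ah q ^ 2)) p =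
      flatLaplacian (fun q => Real.log (ah q ^ 2)) p := by
    unfold flatLaplacian
    congr 1
    · have hev : (fun t => Real.log (Real.sqrt 2 * ah (t, p.2) ^ 2)) =ᶠ[nhds p.1]
          (fun t => Real.log (Real.sqrt 2) + Real.log (ah (t, p.2) ^ 2)) := by
        have : ∀ᶠ t in nhds p.1, (t, p.2) ∈ U := by
          have : Continuous fun t : ℝ => (t, p.2) := by continuity
          exact this.continuousAt.preimage_mem_nhds (hUo.mem_nhds hp)
        filter_upwards [this] with t ht using hlogeq _ ht
      rw [iteratedDeriv_two_congr hev, iteratedDeriv_two_shift]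
    · have hev : (fun t => Real.log (Real.sqrt 2 * ah (p.1, t) ^ 2)) =ᶠ[nhds p.2]
          (fun t => Real.log (Real.sqrt 2) + Real.log (ah (p.1, t) ^ 2)) := by
        have : ∀ᶠ t in nhds p.2, (p.1, t) ∈ U := by
          have : Continuous fun t : ℝ => (p.1, t) := by continuity
          exact this.continuousAt.preimage_mem_nhds (hUo.mem_nhds hp)
        filter_upwards [this] with t ht using hlogeq _ ht
      rw [iteratedDeriv_two_congr hev, iteratedDeriv_two_shift]
  rw [hLap, heq p hp]
  -- sinh computation
  have ha : (0:ℝ) < ah p := hpos p hp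
  have hx : (0:ℝ) < Real.sqrt 2 * ah p ^ 2 := by positivity
  rw [Real.sinh_eq, Real.exp_log hx, ← Real.log_inv, Real.exp_log (by positivity)]
  have h2sq : Real.sqrt 2 * Real.sqrt 2 = 2 := Real.mul_self_sqrt (by norm_num)
  field_simp
  ring_nf
  have h3 : Real.sqrt 2 ^ 3 = 2 * Real.sqrt 2 := by
    rw [pow_succ, pow_two, h2sq]
  linear_combination (8 * ah p ^ 4) * h2sq
end
end

section
/- Let C > 0, let λ ∈ ℂ with |λ| = 1, let v₋, v₊ : ℝ → ℝ_{>0} be smooth, and set h = C²(v₋ v₊)^{−1/2}. Define L, M : ℝ → M₂(ℍ) by L = [[−(i/4)(log v₋)' + j·conj(λ)·√v₋, −conj(λ)·√(h/2)], [λ·√(h/2), (i/4)(log v₊)' + j·λ·√v₊]] and M = [[−j·i·conj(λ)·√v₋, i·conj(λ)·√(h/2)], [i·λ·√(h/2), j·i·λ·√v₊]]. Then the Lax equation L' = L·M − M·L holds on ℝ if and only if v₋ and v₊ satisfy the 1D Toda lattice equations (log v₋)'' = 4(C²(v₋v₊)^{−1/2} − 2v₋) and (log v₊)'' = 4(C²(v₋v₊)^{−1/2}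 − 2v₊). -/
noncomputable section

open Matrix

/-- The complex number `a` viewed as a quaternion, `ℂ ⊂ ℍ = ℂ ⊕ jℂ`. -/
def Cq (a : ℂ) : Quaternion ℝ := ⟨a.re, a.im, 0, 0⟩

/-- The quaternion `j`. -/
def jq : Quaternion ℝ := ⟨0, 0, 1, 0⟩

/-- The quaternion `a + j b` for complex numbers `a, b`, via `ℍ = ℂ ⊕ jℂ`. -/
def toQuat (a b : ℂ) : Quaternion ℝ := Cq a + jq * Cq b

/-- `h = C² (v₋ v₊)^{−1/2}`. -/
def hFun (C : ℝ) (vm vp : ℝ → ℝ) (t : ℝ) : ℝ :=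
  C ^ 2 * (vm t * vp t) ^ (-(1 / 2) : ℝ)

/-- The Lax matrix
`L = [[−(i/4)(log v₋)' + j conj(λ)√v₋, −conj(λ)√(h/2)], [λ√(h/2), (i/4)(log v₊)' + j λ√v₊]]`. -/
def laxL (C : ℝ) (lam : ℂ) (vm vp : ℝ → ℝ) (t : ℝ) : Matrix (Fin 2) (Fin 2) (Quaternion ℝ) :=
  !![toQuat (-(Complex.I / 4) * (deriv (fun s => Real.log (vm s)) t : ℂ))
        (starRingEnd ℂ lam * (Real.sqrt (vm t) : ℂ)),
      toQuat (-(starRingEnd ℂ lam) * (Real.sqrt (hFun C vm vp t / 2) : ℂ)) 0;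
     toQuat (lam * (Real.sqrt (hFun C vm vp t / 2) : ℂ)) 0,
      toQuat ((Complex.I / 4) * (deriv (fun s => Real.log (vp s)) t : ℂ))
        (lam * (Real.sqrt (vp t) : ℂ))]

/-- The Lax matrix
`M = [[−j i conj(λ)√v₋, i conj(λ)√(h/2)], [i λ√(h/2), j i λ√v₊]]`. -/
def laxM (C : ℝ) (lam : ℂ) (vm vp : ℝ → ℝ) (t : ℝ) : Matrix (Fin 2) (Fin 2) (Quaternion ℝ) :=
  !![toQuat 0 (-(Complex.I) * starRingEnd ℂ lam * (Real.sqrt (vm t) : ℂ)),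
      toQuat (Complex.I * starRingEnd ℂ lam * (Real.sqrt (hFun C vm vp t / 2) : ℂ)) 0;
     toQuat (Complex.I * lam * (Real.sqrt (hFun C vm vp t / 2) : ℂ)) 0,
      toQuat 0 (Complex.I * lam * (Real.sqrt (vp t) : ℂ))]

lemma toQuat_def (a b : ℂ) : toQuat a b = ⟨a.re, a.im, b.re, -b.im⟩ := by
  apply Quaternion.ext <;>
    simp only [toQuat, Quaternion.re_add, Quaternion.imI_add, Quaternion.imJ_add, Quaternion.imK_add,
      Quaternion.re_mul, Quaternion.imI_mul, Quaternion.imJ_mul, Quaternion.imK_mul] <;> simp [Cq, jq]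

lemma toQuat_mul (a b c d : ℂ) :
    toQuat a b * toQuat c d =
      toQuat (a * c - (starRingEnd ℂ) b * d) ((starRingEnd ℂ) a * d + b * c) := by
  apply Quaternion.ext <;>
    simp only [Quaternion.re_mul, Quaternion.imI_mul, Quaternion.imJ_mul, Quaternion.imK_mul] <;>
    simp [toQuat_def, Complex.mul_re, Complex.mul_im, Complex.sub_re, Complex.sub_im,
      Complex.add_re, Complex.add_im, Complex.conj_re, Complex.conj_im] <;> ring

lemma toQuat_inj {a b c d : ℂ} : toQuat a b = toQuat c d ↔ a = c ∧ b = d := by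
  rw [Quaternion.ext_iff]; simp only [toQuat_def, Complex.ext_iff]
  constructor
  · rintro ⟨h1, h2, h3, h4⟩; exact ⟨⟨h1, h2⟩, h3, by linarith⟩
  · rintro ⟨⟨h1, h2⟩, h3, h4⟩; exact ⟨h1, h2, h3, by rw [h4]⟩

lemma hasDerivAt_toQuat {f g : ℝ → ℂ} {f' g' : ℂ} {t : ℝ}
    (hf : HasDerivAt f f' t) (hg : HasDerivAt g g' t) :
    HasDerivAt (fun s => toQuat (f s) (g s)) (toQuat f' g') t := by
  have hfr : HasDerivAt (fun s => (f s).re) f'.re t :=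
    (Complex.reCLM.hasFDerivAt.comp_hasDerivAt t hf)
  have hfi : HasDerivAt (fun s => (f s).im) f'.im t :=
    (Complex.imCLM.hasFDerivAt.comp_hasDerivAt t hf)
  have hgr : HasDerivAt (fun s => (g s).re) g'.re t :=
    (Complex.reCLM.hasFDerivAt.comp_hasDerivAt t hg)
  have hgi : HasDerivAt (fun s => (g s).im) g'.im t :=
    (Complex.imCLM.hasFDerivAt.comp_hasDerivAt t hg)
  have h1 : HasDerivAt (fun s => ((f s).re) • (toQuat 1 0)
      + ((f s).im) • (toQuat Complex.I 0)
      + ((g s).re) • (toQuat 0 1)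
      + ((g s).im) • (toQuat 0 Complex.I))
      (f'.re • (toQuat 1 0) + f'.im • (toQuat Complex.I 0)
        + g'.re • (toQuat 0 1) + g'.im • (toQuat 0 Complex.I)) t :=
    (((hfr.smul_const _).add (hfi.smul_const _)).add (hgr.smul_const _)).add (hgi.smul_const _)
  convert h1 using 2 with s <;>
  · apply Quaternion.ext <;> simp only [Quaternion.re_add, Quaternion.imI_add, Quaternion.imJ_add,
      Quaternion.imK_add, Quaternion.re_smul, Quaternion.imI_smul, Quaternion.imJ_smul,
      Quaternion.imK_smul] <;> simp [toQuat_def]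

lemma toQuat_add (a b c d : ℂ) : toQuat a b + toQuat c d = toQuat (a + c) (b + d) := by
  apply Quaternion.ext <;> simp only [Quaternion.re_add, Quaternion.imI_add, Quaternion.imJ_add,
    Quaternion.imK_add] <;> simp [toQuat_def] <;> ring

lemma toQuat_sub (a b c d : ℂ) : toQuat a b - toQuat c d = toQuat (a - c) (b - d) := by
  apply Quaternion.ext <;> simp only [Quaternion.re_sub, Quaternion.imI_sub, Quaternion.imJ_sub,
    Quaternion.imK_sub] <;> simp [toQuat_def] <;> ring


theorem lax_representation_iff_toda
    (C : ℝ) (hC : 0 < C) (lam : ℂ) (hlam : ‖lam‖ = 1)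
    (vm vp : ℝ → ℝ) (hvm : ∀ t, 0 < vm t) (hvp : ∀ t, 0 < vp t)
    (hsm : ContDiff ℝ (⊤ : ℕ∞) vm ∧ ContDiff ℝ (⊤ : ℕ∞) vp) :
    (∀ (t : ℝ) (i j : Fin 2),
        deriv (fun s => laxL C lam vm vp s i j) t =
          (laxL C lam vm vp t * laxM C lam vm vp t -
            laxM C lam vm vp t * laxL C lam vm vp t) i j) ↔
    (∀ t : ℝ,
        iteratedDeriv 2 (fun s => Real.log (vm s)) t =
          4 * (C ^ 2 * (vm t * vp t) ^ (-(1 / 2) : ℝ) - 2 * vm t) ∧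
        iteratedDeriv 2 (fun s => Real.log (vp s)) t =
          4 * (C ^ 2 * (vm t * vp t) ^ (-(1 / 2) : ℝ) - 2 * vp t)) := by
  obtain ⟨hsm1, hsm2⟩ := hsm
  have hml : (starRingEnd ℂ) lam * lam = 1 := by
    rw [mul_comm, Complex.mul_conj]
    norm_cast
    rw [Complex.normSq_eq_norm_sq, hlam]; norm_num
  have main : ∀ t : ℝ,
      (∀ i j : Fin 2, deriv (fun s => laxL C lam vm vp s i j) t =
        (laxL C lam vm vp t * laxM C lam vm vp t -
          laxM C lam vm vp t * laxL C lam vm vp t) i j) ↔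
      (iteratedDeriv 2 (fun s => Real.log (vm s)) t =
          4 * (C ^ 2 * (vm t * vp t) ^ (-(1 / 2) : ℝ) - 2 * vm t) ∧
        iteratedDeriv 2 (fun s => Real.log (vp s)) t =
          4 * (C ^ 2 * (vm t * vp t) ^ (-(1 / 2) : ℝ) - 2 * vp t)) := by
    intro t
    have hab : 0 < vm t * vp t := mul_pos (hvm t) (hvp t)
    have hdvm : HasDerivAt vm (deriv vm t) t := (hsm1.differentiable (by simp) t).hasDerivAt
    have hdvp : HasDerivAt vp (deriv vp t) t := (hsm2.differentiable (by simp) t).hasDerivAt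
    have hlogm : ContDiff ℝ (⊤ : ℕ∞) (fun s => Real.log (vm s)) :=
      contDiff_iff_contDiffAt.mpr fun s => (Real.contDiffAt_log.mpr (hvm s).ne').comp s hsm1.contDiffAt
    have hlogp : ContDiff ℝ (⊤ : ℕ∞) (fun s => Real.log (vp s)) :=
      contDiff_iff_contDiffAt.mpr fun s => (Real.contDiffAt_log.mpr (hvp s).ne').comp s hsm2.contDiffAt
    have hane : vm t ≠ 0 := (hvm t).ne'
    have hbne : vp t ≠ 0 := (hvp t).ne'
    have F1m : HasDerivAt (fun s => deriv (fun r => Real.log (vm r)) s) (iteratedDeriv 2 (fun s => Real.log (vm s)) t) t := by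
      rw [iteratedDeriv_succ, iteratedDeriv_one]
      have hoo : ContDiff ℝ ((⊤ : ℕ∞) : WithTop ℕ∞) (fun s => Real.log (vm s)) :=
        hlogm.of_le (by simp)
      exact (((contDiff_infty_iff_deriv.mp hoo).2.differentiable (by simp)) t).hasDerivAt
    have F1p : HasDerivAt (fun s => deriv (fun r => Real.log (vp r)) s) (iteratedDeriv 2 (fun s => Real.log (vp s)) t) t := by
      rw [iteratedDeriv_succ, iteratedDeriv_one]
      have hoo : ContDiff ℝ ((⊤ : ℕ∞) : WithTop ℕ∞) (fun s => Real.log (vp s)) :=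
        hlogp.of_le (by simp)
      exact (((contDiff_infty_iff_deriv.mp hoo).2.differentiable (by simp)) t).hasDerivAt
    have gcm : ∀ s : ℝ, deriv (fun r => ((Real.log (vm r) : ℝ) : ℂ)) s =
        ((deriv (fun r => Real.log (vm r)) s : ℝ) : ℂ) := fun s =>
      HasDerivAt.deriv (HasDerivAt.ofReal_comp ((hlogm.differentiable (by simp) s).hasDerivAt))
    have gcp : ∀ s : ℝ, deriv (fun r => ((Real.log (vp r) : ℝ) : ℂ)) s =
        ((deriv (fun r => Real.log (vp r)) s : ℝ) : ℂ) := fun s =>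
      HasDerivAt.deriv (HasDerivAt.ofReal_comp ((hlogp.differentiable (by simp) s).hasDerivAt))
    have hUm : deriv (fun s => Real.log (vm s)) t = (vm t)⁻¹ * deriv vm t :=
      ((Real.hasDerivAt_log (hvm t).ne').comp t hdvm).deriv
    have hUp : deriv (fun s => Real.log (vp s)) t = (vp t)⁻¹ * deriv vp t :=
      ((Real.hasDerivAt_log (hvp t).ne').comp t hdvp).deriv
    have hPne : Real.sqrt (vm t) ≠ 0 := (Real.sqrt_pos.mpr (hvm t)).ne'
    have hQne : Real.sqrt (vp t) ≠ 0 := (Real.sqrt_pos.mpr (hvp t)).ne'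
    have hP2 : Real.sqrt (vm t) * Real.sqrt (vm t) = vm t := Real.mul_self_sqrt (hvm t).le
    have hQ2 : Real.sqrt (vp t) * Real.sqrt (vp t) = vp t := Real.mul_self_sqrt (hvp t).le
    have F2m : HasDerivAt (fun s => Real.sqrt (vm s)) (1/2 * Real.sqrt (vm t) * (deriv (fun s => Real.log (vm s)) t)) t := by
      have h0 := (Real.hasDerivAt_sqrt (hvm t).ne').comp t hdvm
      refine h0.congr_deriv (Eq.symm ?_)
      rw [hUm]
      field_simp
      linear_combination (deriv vm t) * hP2
    have F2p : HasDerivAt (fun s => Real.sqrt (vp s)) (1/2 * Real.sqrt (vp t) * (deriv (fun s => Real.log (vp s)) t)) t := by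
      have h0 := (Real.hasDerivAt_sqrt (hvp t).ne').comp t hdvp
      refine h0.congr_deriv (Eq.symm ?_)
      rw [hUp]
      field_simp
      linear_combination (deriv vp t) * hQ2
    have hh2pos : 0 < hFun C vm vp t / 2 := by
      have h1 : 0 < (vm t * vp t) ^ (-(1/2) : ℝ) := Real.rpow_pos_of_pos hab _
      have : 0 < hFun C vm vp t := mul_pos (pow_pos hC 2) h1
      linarith
    have hWne : Real.sqrt (hFun C vm vp t / 2) ≠ 0 := (Real.sqrt_pos.mpr hh2pos).ne'
    have hW2 : Real.sqrt (hFun C vm vp t / 2) * Real.sqrt (hFun C vm vp t / 2) = hFun C vm vp t / 2 := Real.mul_self_sqrt hh2pos.le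
    have hprod : HasDerivAt (fun s => vm s * vp s)
        (deriv vm t * vp t + vm t * deriv vp t) t := hdvm.mul hdvp
    have hrpow : HasDerivAt (fun s => (vm s * vp s) ^ (-(1/2) : ℝ))
        (-(1/2) * (vm t * vp t) ^ ((-(1/2) : ℝ) - 1) *
          (deriv vm t * vp t + vm t * deriv vp t)) t :=
      by have h := (Real.hasDerivAt_rpow_const (x := vm t * vp t) (p := (-(1/2) : ℝ)) (Or.inl hab.ne')).comp t hprod; exact h
    have hhd : HasDerivAt (fun s => hFun C vm vp s / 2)
        (C ^ 2 * (-(1/2) * (vm t * vp t) ^ ((-(1/2) : ℝ) - 1) *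
          (deriv vm t * vp t + vm t * deriv vp t)) / 2) t := by
      have h0 := (hrpow.const_mul (C ^ 2)).div_const 2
      simp only [hFun]
      exact h0
    have F3 : HasDerivAt (fun s => Real.sqrt (hFun C vm vp s / 2))
        (-(1/4) * Real.sqrt (hFun C vm vp t / 2) * (deriv (fun s => Real.log (vm s)) t + deriv (fun s => Real.log (vp s)) t)) t := by
      have h0 := (Real.hasDerivAt_sqrt hh2pos.ne').comp t hhd
      refine h0.congr_deriv (Eq.symm ?_)
      have e1 : (vm t * vp t) ^ ((-(1/2) : ℝ) - 1) =
          (vm t * vp t) ^ (-(1/2) : ℝ) / (vm t * vp t) := by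
        rw [Real.rpow_sub hab, Real.rpow_one]
      have eS : Real.sqrt (hFun C vm vp t / 2) * Real.sqrt (hFun C vm vp t / 2) = C ^ 2 * (vm t * vp t) ^ (-(1/2) : ℝ) / 2 := by
        rw [hW2]; simp only [hFun]
      have key : C ^ 2 * (-(1/2) * ((vm t * vp t) ^ (-(1/2) : ℝ) / (vm t * vp t)) *
            (deriv vm t * vp t + vm t * deriv vp t)) / 2 =
          (-(1/2) * ((deriv vm t * vp t + vm t * deriv vp t) / (vm t * vp t))) *
            (Real.sqrt (hFun C vm vp t / 2) * Real.sqrt (hFun C vm vp t / 2)) := by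
        rw [eS]
        field_simp
      rw [hUm, hUp, e1, key]
      set Wv := Real.sqrt (hFun C vm vp t / 2) with hWv
      field_simp
      ring
    -- complex-level derivatives of the entries
    have c00a : HasDerivAt (fun s => -(Complex.I / 4) * ((deriv (fun r => Real.log (vm r)) s : ℝ) : ℂ))
        (-(Complex.I / 4) * ((iteratedDeriv 2 (fun s => Real.log (vm s)) t : ℝ) : ℂ)) t := F1m.ofReal_comp.const_mul _
    have c00b : HasDerivAt (fun s => (starRingEnd ℂ) lam * ((Real.sqrt (vm s) : ℝ) : ℂ)) ((starRingEnd ℂ) lam * ((1/2 * Real.sqrt (vm t) * (deriv (fun s => Real.log (vm s)) t) : ℝ) : ℂ)) t :=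
      F2m.ofReal_comp.const_mul _
    have c01a : HasDerivAt (fun s => -((starRingEnd ℂ) lam) * ((Real.sqrt (hFun C vm vp s / 2) : ℝ) : ℂ))
        (-((starRingEnd ℂ) lam) * ((-(1/4) * Real.sqrt (hFun C vm vp t / 2) * (deriv (fun s => Real.log (vm s)) t + deriv (fun s => Real.log (vp s)) t) : ℝ) : ℂ)) t := F3.ofReal_comp.const_mul _
    have c10a : HasDerivAt (fun s => lam * ((Real.sqrt (hFun C vm vp s / 2) : ℝ) : ℂ))
        (lam * ((-(1/4) * Real.sqrt (hFun C vm vp t / 2) * (deriv (fun s => Real.log (vm s)) t + deriv (fun s => Real.log (vp s)) t) : ℝ) : ℂ)) t := F3.ofReal_comp.const_mul _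
    have c11a : HasDerivAt (fun s => (Complex.I / 4) * ((deriv (fun r => Real.log (vp r)) s : ℝ) : ℂ))
        ((Complex.I / 4) * ((iteratedDeriv 2 (fun s => Real.log (vp s)) t : ℝ) : ℂ)) t := F1p.ofReal_comp.const_mul _
    have c11b : HasDerivAt (fun s => lam * ((Real.sqrt (vp s) : ℝ) : ℂ)) (lam * ((1/2 * Real.sqrt (vp t) * (deriv (fun s => Real.log (vp s)) t) : ℝ) : ℂ)) t :=
      F2p.ofReal_comp.const_mul _
    have E00 : deriv (fun s => laxL C lam vm vp s 0 0) t = toQuat (-(Complex.I / 4) * ((iteratedDeriv 2 (fun s => Real.log (vm s)) t : ℝ) : ℂ)) ((starRingEnd ℂ) lam * ((1/2 * Real.sqrt (vm t) * (deriv (fun s => Real.log (vm s)) t) : ℝ) : ℂ)) := by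
      rw [show (fun s => laxL C lam vm vp s 0 0) = (fun s =>
          toQuat (-(Complex.I / 4) * ((deriv (fun r => Real.log (vm r)) s : ℝ) : ℂ))
            ((starRingEnd ℂ) lam * ((Real.sqrt (vm s) : ℝ) : ℂ))) from by
        funext s
        simp only [laxL, Matrix.cons_val', Matrix.of_apply, Matrix.cons_val_zero, Matrix.cons_val_one,
          Matrix.head_cons, Matrix.empty_val', Matrix.cons_val_fin_one, Matrix.head_fin_const,
          gcm, gcp]]
      exact (hasDerivAt_toQuat c00a c00b).deriv
    have E01 : deriv (fun s => laxL C lam vm vp s 0 1) t = toQuat (-((starRingEnd ℂ) lam) * ((-(1/4) * Real.sqrt (hFun C vm vp t / 2) * (deriv (fun s => Real.log (vm s)) t + deriv (fun s => Real.log (vp s)) t) : ℝ) : ℂ)) 0 := by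
      rw [show (fun s => laxL C lam vm vp s 0 1) = (fun s =>
          toQuat (-((starRingEnd ℂ) lam) * ((Real.sqrt (hFun C vm vp s / 2) : ℝ) : ℂ)) 0) from by
        funext s
        simp only [laxL, Matrix.cons_val', Matrix.of_apply, Matrix.cons_val_zero, Matrix.cons_val_one,
          Matrix.head_cons, Matrix.empty_val', Matrix.cons_val_fin_one, Matrix.head_fin_const,
          gcm, gcp]]
      exact (hasDerivAt_toQuat c01a (hasDerivAt_const t 0)).deriv
    have E10 : deriv (fun s => laxL C lam vm vp s 1 0) t = toQuat (lam * ((-(1/4) * Real.sqrt (hFun C vm vp t / 2) * (deriv (fun s => Real.log (vm s)) t + deriv (fun s => Real.log (vp s)) t) : ℝ) : ℂ)) 0 := by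
      rw [show (fun s => laxL C lam vm vp s 1 0) = (fun s =>
          toQuat (lam * ((Real.sqrt (hFun C vm vp s / 2) : ℝ) : ℂ)) 0) from by
        funext s
        simp only [laxL, Matrix.cons_val', Matrix.of_apply, Matrix.cons_val_zero, Matrix.cons_val_one,
          Matrix.head_cons, Matrix.empty_val', Matrix.cons_val_fin_one, Matrix.head_fin_const,
          gcm, gcp]]
      exact (hasDerivAt_toQuat c10a (hasDerivAt_const t 0)).deriv
    have E11 : deriv (fun s => laxL C lam vm vp s 1 1) t = toQuat ((Complex.I / 4) * ((iteratedDeriv 2 (fun s => Real.log (vp s)) t : ℝ) : ℂ)) (lam * ((1/2 * Real.sqrt (vp t) * (deriv (fun s => Real.log (vp s)) t) : ℝ) : ℂ)) := by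
      rw [show (fun s => laxL C lam vm vp s 1 1) = (fun s =>
          toQuat ((Complex.I / 4) * ((deriv (fun r => Real.log (vp r)) s : ℝ) : ℂ))
            (lam * ((Real.sqrt (vp s) : ℝ) : ℂ))) from by
        funext s
        simp only [laxL, Matrix.cons_val', Matrix.of_apply, Matrix.cons_val_zero, Matrix.cons_val_one,
          Matrix.head_cons, Matrix.empty_val', Matrix.cons_val_fin_one, Matrix.head_fin_const,
          gcm, gcp]]
      exact (hasDerivAt_toQuat c11a c11b).deriv
    -- commutator entries
    have H00 : (laxL C lam vm vp t * laxM C lam vm vp t -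
        laxM C lam vm vp t * laxL C lam vm vp t) 0 0 = toQuat (Complex.I * (2 * ((Real.sqrt (vm t) : ℝ) : ℂ)^2 - 2 * ((Real.sqrt (hFun C vm vp t / 2) : ℝ) : ℂ)^2)) ((starRingEnd ℂ) lam * ((1/2 * Real.sqrt (vm t) * (deriv (fun s => Real.log (vm s)) t) : ℝ) : ℂ)) := by
      simp only [laxL, laxM, Matrix.sub_apply, Matrix.mul_apply, Fin.sum_univ_two, Matrix.of_apply,
        Matrix.cons_val', Matrix.of_apply, Matrix.cons_val_zero, Matrix.cons_val_one, Matrix.head_cons,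
        Matrix.empty_val', Matrix.cons_val_fin_one, Matrix.head_fin_const,
        toQuat_mul, toQuat_add, toQuat_sub, _root_.map_mul, map_neg, map_zero, _root_.map_one, map_div₀,
        map_ofNat, Complex.conj_I, Complex.conj_ofReal, Complex.conj_conj, gcm, gcp]
      rw [toQuat_inj]
      constructor
      · linear_combination (norm := (push_cast; ring1))
          (2 * Complex.I * (((Real.sqrt (vm t) : ℝ) : ℂ)^2 - ((Real.sqrt (hFun C vm vp t / 2) : ℝ) : ℂ)^2)) * hml
      · linear_combination (norm := (push_cast; ring1))
          (-(1/2) * ((deriv (fun s => Real.log (vm s)) t : ℝ) : ℂ) * ((starRingEnd ℂ) lam) * ((Real.sqrt (vm t) : ℝ) : ℂ)) * Complex.I_sq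
    have H01 : (laxL C lam vm vp t * laxM C lam vm vp t -
        laxM C lam vm vp t * laxL C lam vm vp t) 0 1 = toQuat (-((starRingEnd ℂ) lam) * ((-(1/4) * Real.sqrt (hFun C vm vp t / 2) * (deriv (fun s => Real.log (vm s)) t + deriv (fun s => Real.log (vp s)) t) : ℝ) : ℂ)) 0 := by
      simp only [laxL, laxM, Matrix.sub_apply, Matrix.mul_apply, Fin.sum_univ_two, Matrix.of_apply,
        Matrix.cons_val', Matrix.of_apply, Matrix.cons_val_zero, Matrix.cons_val_one, Matrix.head_cons,
        Matrix.empty_val', Matrix.cons_val_fin_one, Matrix.head_fin_const,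
        toQuat_mul, toQuat_add, toQuat_sub, _root_.map_mul, map_neg, map_zero, _root_.map_one, map_div₀,
        map_ofNat, Complex.conj_I, Complex.conj_ofReal, Complex.conj_conj, gcm, gcp]
      rw [toQuat_inj]
      constructor
      · linear_combination (norm := (push_cast; ring1))
          (-(1/4) * (((deriv (fun s => Real.log (vm s)) t : ℝ) : ℂ) + ((deriv (fun s => Real.log (vp s)) t : ℝ) : ℂ)) * ((starRingEnd ℂ) lam) * ((Real.sqrt (hFun C vm vp t / 2) : ℝ) : ℂ)) * Complex.I_sq
      · linear_combination (norm := (push_cast; ring1))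
    have H10 : (laxL C lam vm vp t * laxM C lam vm vp t -
        laxM C lam vm vp t * laxL C lam vm vp t) 1 0 = toQuat (lam * ((-(1/4) * Real.sqrt (hFun C vm vp t / 2) * (deriv (fun s => Real.log (vm s)) t + deriv (fun s => Real.log (vp s)) t) : ℝ) : ℂ)) 0 := by
      simp only [laxL, laxM, Matrix.sub_apply, Matrix.mul_apply, Fin.sum_univ_two, Matrix.of_apply,
        Matrix.cons_val', Matrix.of_apply, Matrix.cons_val_zero, Matrix.cons_val_one, Matrix.head_cons,
        Matrix.empty_val', Matrix.cons_val_fin_one, Matrix.head_fin_const,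
        toQuat_mul, toQuat_add, toQuat_sub, _root_.map_mul, map_neg, map_zero, _root_.map_one, map_div₀,
        map_ofNat, Complex.conj_I, Complex.conj_ofReal, Complex.conj_conj, gcm, gcp]
      rw [toQuat_inj]
      constructor
      · linear_combination (norm := (push_cast; ring1))
          ((1/4) * (((deriv (fun s => Real.log (vm s)) t : ℝ) : ℂ) + ((deriv (fun s => Real.log (vp s)) t : ℝ) : ℂ)) * lam * ((Real.sqrt (hFun C vm vp t / 2) : ℝ) : ℂ)) * Complex.I_sq
      · linear_combination (norm := (push_cast; ring1))
    have H11 : (laxL C lam vm vp t * laxM C lam vm vp t -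
        laxM C lam vm vp t * laxL C lam vm vp t) 1 1 = toQuat (Complex.I * (2 * ((Real.sqrt (hFun C vm vp t / 2) : ℝ) : ℂ)^2 - 2 * ((Real.sqrt (vp t) : ℝ) : ℂ)^2)) (lam * ((1/2 * Real.sqrt (vp t) * (deriv (fun s => Real.log (vp s)) t) : ℝ) : ℂ)) := by
      simp only [laxL, laxM, Matrix.sub_apply, Matrix.mul_apply, Fin.sum_univ_two, Matrix.of_apply,
        Matrix.cons_val', Matrix.of_apply, Matrix.cons_val_zero, Matrix.cons_val_one, Matrix.head_cons,
        Matrix.empty_val', Matrix.cons_val_fin_one, Matrix.head_fin_const,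
        toQuat_mul, toQuat_add, toQuat_sub, _root_.map_mul, map_neg, map_zero, _root_.map_one, map_div₀,
        map_ofNat, Complex.conj_I, Complex.conj_ofReal, Complex.conj_conj, gcm, gcp]
      rw [toQuat_inj]
      constructor
      · linear_combination (norm := (push_cast; ring1))
          (2 * Complex.I * (((Real.sqrt (hFun C vm vp t / 2) : ℝ) : ℂ)^2 - ((Real.sqrt (vp t) : ℝ) : ℂ)^2)) * hml
      · linear_combination (norm := (push_cast; ring1))
          (-(1/2) * ((deriv (fun s => Real.log (vp s)) t : ℝ) : ℂ) * lam * ((Real.sqrt (vp t) : ℝ) : ℂ)) * Complex.I_sq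
    constructor
    · intro H
      have h00 := H 0 0
      have h11 := H 1 1
      rw [E00, H00, toQuat_inj] at h00
      rw [E11, H11, toQuat_inj] at h11
      constructor
      · have hE := h00.1
        have h2 : ((iteratedDeriv 2 (fun s => Real.log (vm s)) t : ℝ) : ℂ) = ((8 * Real.sqrt (hFun C vm vp t / 2)^2 - 8 * Real.sqrt (vm t)^2 : ℝ) : ℂ) := by
          push_cast
          linear_combination (4 * Complex.I) * hE +
            (((iteratedDeriv 2 (fun s => Real.log (vm s)) t : ℝ) : ℂ) + 8 * ((Real.sqrt (vm t) : ℝ) : ℂ)^2 - 8 * ((Real.sqrt (hFun C vm vp t / 2) : ℝ) : ℂ)^2) * Complex.I_sq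
        have h3 : iteratedDeriv 2 (fun s => Real.log (vm s)) t = 8 * Real.sqrt (hFun C vm vp t / 2)^2 - 8 * Real.sqrt (vm t)^2 := by exact_mod_cast h2
        rw [h3, Real.sq_sqrt hh2pos.le, Real.sq_sqrt (hvm t).le]
        simp only [hFun]; ring
      · have hE := h11.1
        have h2 : ((iteratedDeriv 2 (fun s => Real.log (vp s)) t : ℝ) : ℂ) = ((8 * Real.sqrt (hFun C vm vp t / 2)^2 - 8 * Real.sqrt (vp t)^2 : ℝ) : ℂ) := by
          push_cast
          linear_combination (-(4 : ℂ) * Complex.I) * hE +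
            (((iteratedDeriv 2 (fun s => Real.log (vp s)) t : ℝ) : ℂ) - 8 * ((Real.sqrt (hFun C vm vp t / 2) : ℝ) : ℂ)^2 + 8 * ((Real.sqrt (vp t) : ℝ) : ℂ)^2) * Complex.I_sq
        have h3 : iteratedDeriv 2 (fun s => Real.log (vp s)) t = 8 * Real.sqrt (hFun C vm vp t / 2)^2 - 8 * Real.sqrt (vp t)^2 := by exact_mod_cast h2
        rw [h3, Real.sq_sqrt hh2pos.le, Real.sq_sqrt (hvp t).le]
        simp only [hFun]; ring
    · rintro ⟨hTm, hTp⟩ i j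
      have hKm8 : iteratedDeriv 2 (fun s => Real.log (vm s)) t = 8 * Real.sqrt (hFun C vm vp t / 2)^2 - 8 * Real.sqrt (vm t)^2 := by
        rw [hTm, Real.sq_sqrt hh2pos.le, Real.sq_sqrt (hvm t).le]
        simp only [hFun]; ring
      have hKp8 : iteratedDeriv 2 (fun s => Real.log (vp s)) t = 8 * Real.sqrt (hFun C vm vp t / 2)^2 - 8 * Real.sqrt (vp t)^2 := by
        rw [hTp, Real.sq_sqrt hh2pos.le, Real.sq_sqrt (hvp t).le]
        simp only [hFun]; ring
      have hKmC : ((iteratedDeriv 2 (fun s => Real.log (vm s)) t : ℝ) : ℂ) = 8 * ((Real.sqrt (hFun C vm vp t / 2) : ℝ) : ℂ)^2 - 8 * ((Real.sqrt (vm t) : ℝ) : ℂ)^2 := by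
        exact_mod_cast congrArg (fun x : ℝ => (x : ℂ)) hKm8
      have hKpC : ((iteratedDeriv 2 (fun s => Real.log (vp s)) t : ℝ) : ℂ) = 8 * ((Real.sqrt (hFun C vm vp t / 2) : ℝ) : ℂ)^2 - 8 * ((Real.sqrt (vp t) : ℝ) : ℂ)^2 := by
        exact_mod_cast congrArg (fun x : ℝ => (x : ℂ)) hKp8
      fin_cases i <;> fin_cases j
      · show deriv (fun s => laxL C lam vm vp s 0 0) t = (laxL C lam vm vp t * laxM C lam vm vp t -
          laxM C lam vm vp t * laxL C lam vm vp t) 0 0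
        rw [E00, H00, toQuat_inj]
        exact ⟨by linear_combination (-(Complex.I) / 4) * hKmC, rfl⟩
      · show deriv (fun s => laxL C lam vm vp s 0 1) t = (laxL C lam vm vp t * laxM C lam vm vp t -
          laxM C lam vm vp t * laxL C lam vm vp t) 0 1
        rw [E01, H01]
      · show deriv (fun s => laxL C lam vm vp s 1 0) t = (laxL C lam vm vp t * laxM C lam vm vp t -
          laxM C lam vm vp t * laxL C lam vm vp t) 1 0
        rw [E10, H10]
      · show deriv (fun s => laxL C lam vm vp s 1 1) t = (laxL C lam vm vp t * laxM C lam vm vp t -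
          laxM C lam vm vp t * laxL C lam vm vp t) 1 1
        rw [E11, H11, toQuat_inj]
        exact ⟨by linear_combination (Complex.I / 4) * hKpC, rfl⟩
  exact ⟨fun H t => (main t).mp (H t), fun H t i j => (main t).mpr (H t) i j⟩
end
end
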